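/- arXiv:math/0606097 — 3 statements merged into one kernel-verified Lean document; each statement's English description precedes it below -/
import Mathlib

section
/- Let p be an odd prime and let f : ℤ_p → ℚ_p be continuous. Then the sequence of fermionic Riemann sums S_N(f) = Σ_{x=0}^{p^N−1} (−1)^x f(x) (with x regarded as an element of ℤ_p) converges in ℚ_p as N → ∞; i.e., the fermionic p-adic invariant integral I_{−1}(f) = lim_{N→∞} S_N(f) exists. -/
open Filter

private lemma fermionic_aux (p : ℕ) [Fact p.Prime] (g : ℕ → ℚ_[p]) (K : ℕ) (hK : Odd K) :
    ∀ m : ℕ, ∑ x ∈ Finset.range (K * m), (-1 : ℚ_[p]) ^ x * g (x % K)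
      = (∑ j ∈ Finset.range m, (-1 : ℚ_[p]) ^ j) * ∑ a ∈ Finset.range K, (-1 : ℚ_[p]) ^ a * g a := by
  intro m
  induction m with
  | zero => simp
  | succ m ih =>
      rw [Nat.mul_succ, Finset.sum_range_add, ih, Finset.sum_range_succ, add_mul]
      congr 1
      have h1 : ∀ x ∈ Finset.range K,
          (-1 : ℚ_[p]) ^ (K * m + x) * g ((K * m + x) % K)
            = (-1 : ℚ_[p]) ^ m * ((-1 : ℚ_[p]) ^ x * g x) := by
        intro x hx
        rw [Finset.mem_range] at hx
        have hmod : (K * m + x) % K = x := by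
          rw [Nat.mul_add_mod, Nat.mod_eq_of_lt hx]
        rw [hmod, pow_add, pow_mul, hK.neg_one_pow, mul_assoc]
      rw [Finset.sum_congr rfl h1, ← Finset.mul_sum, mul_comm]

/-- The fermionic Riemann sums of a continuous function `f : ℤ_p → ℚ_p`
converge, i.e. the fermionic `p`-adic invariant integral `I_{-1}(f)` exists. -/
theorem fermionic_integral_exists (p : ℕ) [Fact p.Prime] (hp : Odd p)
    (f : ℤ_[p] → ℚ_[p]) (hf : Continuous f) :
    ∃ L : ℚ_[p],
      Tendsto (fun N : ℕ => ∑ x ∈ Finset.range (p ^ N), (-1 : ℚ_[p]) ^ x * f (x : ℤ_[p]))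
        atTop (nhds L) := by
  set S : ℕ → ℚ_[p] := fun N => ∑ x ∈ Finset.range (p ^ N), (-1 : ℚ_[p]) ^ x * f (x : ℤ_[p])
    with hS
  have hp1 : 1 < p := (Fact.out : p.Prime).one_lt
  -- key identity: for N ≤ M, S N is the sum over range (p ^ M) of signs times f (x % p^N)
  have key : ∀ N M : ℕ, N ≤ M →
      S M - S N = ∑ x ∈ Finset.range (p ^ M),
        (-1 : ℚ_[p]) ^ x * (f (x : ℤ_[p]) - f ((x % p ^ N : ℕ) : ℤ_[p])) := by
    intro N M hNM
    have hodd : Odd (p ^ N) := hp.pow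
    have hm : Odd (p ^ (M - N)) := hp.pow
    have hKM : p ^ N * p ^ (M - N) = p ^ M := by
      rw [← pow_add]; congr 1; omega
    have := fermionic_aux p (fun x => f ((x : ℕ) : ℤ_[p])) (p ^ N) hodd (p ^ (M - N))
    rw [hKM] at this
    have hsum1 : (∑ j ∈ Finset.range (p ^ (M - N)), (-1 : ℚ_[p]) ^ j) = 1 := by
      rw [neg_one_geom_sum, if_neg (Nat.not_even_iff_odd.mpr hm)]
    rw [hsum1, one_mul] at this
    calc S M - S N
        = ∑ x ∈ Finset.range (p ^ M),
            ((-1 : ℚ_[p]) ^ x * f (x : ℤ_[p])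
              - (-1 : ℚ_[p]) ^ x * f ((x % p ^ N : ℕ) : ℤ_[p])) := by
          rw [Finset.sum_sub_distrib, hS]
          simp only
          rw [this]
      _ = _ := by
          refine Finset.sum_congr rfl fun x _ => ?_
          ring
  -- Cauchy
  have hcauchy : CauchySeq S := by
    rw [Metric.cauchySeq_iff']
    intro ε hε
    -- uniform continuity
    have huc : UniformContinuous f := CompactSpace.uniformContinuous_of_continuous hf
    obtain ⟨δ, hδ, hδ'⟩ := Metric.uniformContinuous_iff.mp huc (ε / 2) (by positivity)
    -- choose N with p ^ (-N) < δ
    have htend : Tendsto (fun N : ℕ => ((p : ℝ)⁻¹) ^ N) atTop (nhds 0) := by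
      apply tendsto_pow_atTop_nhds_zero_of_lt_one
      · positivity
      · rw [inv_lt_one_iff₀]; right; exact_mod_cast hp1
    obtain ⟨N₀, hN₀⟩ := (Metric.tendsto_atTop.mp htend δ hδ)
    refine ⟨N₀, fun M hM => ?_⟩
    rw [dist_eq_norm, key N₀ M hM]
    have hbound : ∀ x ∈ Finset.range (p ^ M),
        ‖(-1 : ℚ_[p]) ^ x * (f (x : ℤ_[p]) - f ((x % p ^ N₀ : ℕ) : ℤ_[p]))‖ ≤ ε / 2 := by
      intro x _
      rw [norm_mul, norm_pow, norm_neg, norm_one, one_pow, one_mul]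
      have hdist : dist ((x : ℤ_[p])) (((x % p ^ N₀ : ℕ) : ℤ_[p])) < δ := by
        rw [dist_eq_norm]
        have hdvd : ((p : ℤ_[p]) ^ N₀) ∣ ((x : ℤ_[p]) - ((x % p ^ N₀ : ℕ) : ℤ_[p])) := by
          have hx : (x : ℤ_[p]) = ((p ^ N₀ * (x / p ^ N₀) + x % p ^ N₀ : ℕ) : ℤ_[p]) := by
            congr 1
            exact (Nat.div_add_mod x (p ^ N₀)).symm
          rw [hx]
          push_cast
          ring_nf
          exact Dvd.intro _ rfl
        have := (PadicInt.norm_le_pow_iff_mem_span_pow _ N₀).mpr (Ideal.mem_span_singleton.mpr hdvd)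
        calc ‖(x : ℤ_[p]) - ((x % p ^ N₀ : ℕ) : ℤ_[p])‖ ≤ (p : ℝ) ^ (-(N₀ : ℤ)) := this
          _ = ((p : ℝ)⁻¹) ^ N₀ := by
              rw [zpow_neg, inv_pow, zpow_natCast]
          _ < δ := by
              have := hN₀ N₀ le_rfl
              rwa [Real.dist_eq, sub_zero, abs_of_nonneg (by positivity)] at this
      exact le_of_lt (by simpa [dist_eq_norm] using hδ' hdist)
    calc ‖∑ x ∈ Finset.range (p ^ M),
            (-1 : ℚ_[p]) ^ x * (f (x : ℤ_[p]) - f ((x % p ^ N₀ : ℕ) : ℤ_[p]))‖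
        ≤ ε / 2 := IsUltrametricDist.norm_sum_le_of_forall_le_of_nonneg (by positivity) hbound
      _ < ε := by linarith
  exact cauchySeq_tendsto_of_complete hcauchy
end

section
/- Let p be an odd prime, let f be an odd positive integer with p ∤ f, let χ be a Dirichlet character modulo f with values in ℚ_p, and let n ∈ ℕ. Then the sums Σ_{x=0}^{f·p^N−1} (−1)^x χ(x) x^n converge in ℚ_p as N → ∞ (this limit is the fermionic p-adic invariant integral ∫_X χ(x) x^n dμ_{−1}(x) over X = lim← ℤ/f p^N ℤ). -/
open Filter

private lemma sum_range_mul' {M : Type*} [AddCommMonoid M] (g : ℕ → M) (a b : ℕ) :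
    ∑ x ∈ Finset.range (a * b), g x
      = ∑ j ∈ Finset.range a, ∑ y ∈ Finset.range b, g (j * b + y) := by
  induction a with
  | zero => simp
  | succ a ih =>
      rw [Nat.succ_mul, Finset.sum_range_add, ih, Finset.sum_range_succ]

/-- For a Dirichlet character `χ` mod `f` (`f` odd, prime to `p`) with values in `ℚ_p`,
the fermionic Riemann sums `∑_{x=0}^{f·p^N - 1} (-1)^x χ(x) x^n` converge in `ℚ_p`. -/
theorem generalized_fermionic_integral_exists (p : ℕ) [Fact p.Prime] (hp : Odd p)
    (f : ℕ) (hf : Odd f) (hf0 : 0 < f) (hpf : ¬ (p : ℕ) ∣ f)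
    (χ : DirichletCharacter ℚ_[p] f) (n : ℕ) :
    ∃ L : ℚ_[p],
      Tendsto
        (fun N : ℕ => ∑ x ∈ Finset.range (f * p ^ N),
          (-1 : ℚ_[p]) ^ x * χ (x : ZMod f) * (x : ℚ_[p]) ^ n)
        atTop (nhds L) := by
  have hp1 : 1 < (p : ℝ) := by exact_mod_cast (Fact.out : p.Prime).one_lt
  set S : ℕ → ℚ_[p] := fun N => ∑ x ∈ Finset.range (f * p ^ N),
      (-1 : ℚ_[p]) ^ x * χ (x : ZMod f) * (x : ℚ_[p]) ^ n with hS
  -- bound on the character values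
  haveI : NeZero f := ⟨hf0.ne'⟩
  obtain ⟨C, hC0, hC⟩ : ∃ C : ℝ, 0 ≤ C ∧ ∀ a : ZMod f, ‖χ a‖ ≤ C := by
    refine ⟨Finset.univ.sup' Finset.univ_nonempty (fun a => ‖χ a‖), ?_, fun a => ?_⟩
    · exact le_trans (norm_nonneg (χ (0 : ZMod f)))
        (Finset.le_sup' (fun a => ‖χ a‖) (Finset.mem_univ (0 : ZMod f)))
    · exact Finset.le_sup' (fun a => ‖χ a‖) (Finset.mem_univ a)
  -- key estimate on consecutive differences
  have key : ∀ N : ℕ, ‖S (N + 1) - S N‖ ≤ C * ((p : ℝ)⁻¹) ^ N := by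
    intro N
    set M : ℕ := f * p ^ N with hM
    have hModd : Odd M := hf.mul (hp.pow)
    have hsplit : f * p ^ (N + 1) = p * M := by rw [hM]; ring
    have hSnew : S (N + 1) = ∑ j ∈ Finset.range p, ∑ y ∈ Finset.range M,
        (-1 : ℚ_[p]) ^ (j * M + y) * χ ((j * M + y : ℕ) : ZMod f)
          * ((j * M + y : ℕ) : ℚ_[p]) ^ n := by
      rw [hS]; simp only [hsplit]
      exact sum_range_mul' _ p M
    -- simplify each term
    have hterm : ∀ j y : ℕ,
        (-1 : ℚ_[p]) ^ (j * M + y) * χ ((j * M + y : ℕ) : ZMod f)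
          * ((j * M + y : ℕ) : ℚ_[p]) ^ n
        = (-1 : ℚ_[p]) ^ j * ((-1 : ℚ_[p]) ^ y * χ (y : ZMod f)
            * ((j * M + y : ℕ) : ℚ_[p]) ^ n) := by
      intro j y
      have h1 : (-1 : ℚ_[p]) ^ (j * M + y) = (-1 : ℚ_[p]) ^ j * (-1 : ℚ_[p]) ^ y := by
        rw [pow_add, mul_comm j M, pow_mul, hModd.neg_one_pow]
      have h2 : ((j * M + y : ℕ) : ZMod f) = (y : ZMod f) := by
        push_cast [hM]
        simp [ZMod.natCast_self]
      rw [h1, h2]; ring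
    have hgeom : ∑ j ∈ Finset.range p, (-1 : ℚ_[p]) ^ j = 1 := by
      rw [geom_sum_eq (by norm_num : (-1 : ℚ_[p]) ≠ 1), hp.neg_one_pow]
      norm_num
    -- the difference
    have hdiff : S (N + 1) - S N = ∑ j ∈ Finset.range p, ∑ y ∈ Finset.range M,
        (-1 : ℚ_[p]) ^ j * ((-1 : ℚ_[p]) ^ y * χ (y : ZMod f)
          * (((j * M + y : ℕ) : ℚ_[p]) ^ n - ((y : ℕ) : ℚ_[p]) ^ n)) := by
      rw [hSnew]
      simp only [hterm]
      have : S N = ∑ j ∈ Finset.range p, (-1 : ℚ_[p]) ^ j * ∑ y ∈ Finset.range M,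
          (-1 : ℚ_[p]) ^ y * χ (y : ZMod f) * ((y : ℕ) : ℚ_[p]) ^ n := by
        rw [← Finset.sum_mul, hgeom, one_mul, hS, hM]
      rw [this, ← Finset.sum_sub_distrib]
      refine Finset.sum_congr rfl (fun j _ => ?_)
      rw [← Finset.mul_sum, ← Finset.mul_sum, ← mul_sub, ← Finset.sum_sub_distrib]
      congr 1
      refine Finset.sum_congr rfl (fun y _ => ?_)
      ring
    rw [hdiff]
    -- norm bound via ultrametric inequality
    have hpowinv : ((p : ℝ)⁻¹) ^ N = (p : ℝ) ^ (-(N : ℤ)) := by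
      rw [zpow_neg, inv_pow, zpow_natCast]
    refine IsUltrametricDist.norm_sum_le_of_forall_le_of_nonneg
      (by positivity) (fun j _ => ?_)
    refine IsUltrametricDist.norm_sum_le_of_forall_le_of_nonneg
      (by positivity) (fun y _ => ?_)
    have hdvd : ((p : ℤ) ^ N) ∣ (((j * M + y : ℕ) : ℤ) ^ n - ((y : ℕ) : ℤ) ^ n) := by
      have h1 : ((j * M + y : ℕ) : ℤ) ≡ ((y : ℕ) : ℤ) [ZMOD ((p : ℤ) ^ N)] :=
        Int.ModEq.symm (Int.modEq_iff_dvd.mpr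
          ⟨(j * f : ℕ), by push_cast [hM]; ring⟩)
      exact ((h1.pow n).symm).dvd
    have hd : ‖(((j * M + y : ℕ) : ℚ_[p]) ^ n - ((y : ℕ) : ℚ_[p]) ^ n)‖
        ≤ (p : ℝ) ^ (-(N : ℤ)) := by
      have := (Padic.norm_int_le_pow_iff_dvd (p := p)
        (((j * M + y : ℕ) : ℤ) ^ n - ((y : ℕ) : ℤ) ^ n) N).mpr hdvd
      convert this using 2
      push_cast
      ring
    calc ‖(-1 : ℚ_[p]) ^ j * ((-1 : ℚ_[p]) ^ y * χ (y : ZMod f)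
          * (((j * M + y : ℕ) : ℚ_[p]) ^ n - ((y : ℕ) : ℚ_[p]) ^ n))‖
        = ‖χ (y : ZMod f)‖ * ‖(((j * M + y : ℕ) : ℚ_[p]) ^ n - ((y : ℕ) : ℚ_[p]) ^ n)‖ := by
          simp [norm_mul]
      _ ≤ C * ((p : ℝ)⁻¹) ^ N := by
          rw [hpowinv]
          exact mul_le_mul (hC _) hd (norm_nonneg _) hC0
  -- conclude via Cauchy completeness
  have hsum : Summable (fun N : ℕ => C * ((p : ℝ)⁻¹) ^ N) :=
    (summable_geometric_of_lt_one (by positivity)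
      (inv_lt_one_of_one_lt₀ hp1)).mul_left C
  have hcauchy : CauchySeq S := by
    refine cauchySeq_of_dist_le_of_summable _ (fun N => ?_) hsum
    rw [dist_eq_norm, norm_sub_rev]
    exact key N
  exact cauchySeq_tendsto_of_complete hcauchy
end

section
/- (Recurrence characterization of the generalized Euler numbers, from equations (10)–(11)) Let p be an odd prime, let f be an odd positive integer with p ∤ f, let χ be a Dirichlet character modulo f with values in ℚ_p, and for each n ∈ ℕ set E_{n,χ} = lim_{N→∞} Σ_{x=0}^{f·p^N−1} (−1)^x χ(x) x^n (these limits exist in ℚ_p). Then for every n ∈ ℕ: Σ_{k=0}^{n} C(n,k) f^{n−k} E_{k,χ} + E_{n,χ} = 2 · Σ_{a=0}^{f−1} (−1)^a χ(a) a^n. -/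
open Filter

/-- Recurrence for the generalized Euler numbers (equations (10)–(11)): with
`E_{n,χ} = lim_N ∑_{x=0}^{f·p^N-1} (-1)^x χ(x) xⁿ`, one has for every `n`:
`∑_{k≤n} C(n,k) f^{n-k} E_{k,χ} + E_{n,χ} = 2 ∑_{a=0}^{f-1} (-1)^a χ(a) aⁿ`. -/
theorem generalized_euler_recurrence (p : ℕ) [Fact p.Prime] (hp : Odd p)
    (f : ℕ) (hf : Odd f) (hf0 : 0 < f) (hpf : ¬ (p : ℕ) ∣ f)
    (χ : DirichletCharacter ℚ_[p] f) (E : ℕ → ℚ_[p])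
    (hE : ∀ n : ℕ, Tendsto
      (fun N : ℕ => ∑ x ∈ Finset.range (f * p ^ N),
        (-1 : ℚ_[p]) ^ x * χ (x : ZMod f) * (x : ℚ_[p]) ^ n)
      atTop (nhds (E n))) :
    ∀ n : ℕ,
      (∑ k ∈ Finset.range (n + 1), (n.choose k : ℚ_[p]) * (f : ℚ_[p]) ^ (n - k) * E k) + E n
        = 2 * ∑ a ∈ Finset.range f, (-1 : ℚ_[p]) ^ a * χ (a : ZMod f) * (a : ℚ_[p]) ^ n := by
  intro n
  -- notation
  set G : ℕ → ℚ_[p] := fun x => (-1 : ℚ_[p]) ^ x * χ (x : ZMod f) * (x : ℚ_[p]) ^ n with hG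
  set S : ℕ → ℕ → ℚ_[p] := fun m N => ∑ x ∈ Finset.range (f * p ^ N),
      (-1 : ℚ_[p]) ^ x * χ (x : ZMod f) * (x : ℚ_[p]) ^ m with hS
  -- key per-N identity
  have key : ∀ N : ℕ,
      (∑ k ∈ Finset.range (n + 1), (n.choose k : ℚ_[p]) * (f : ℚ_[p]) ^ (n - k) * S k N)
        + S n N
      = (∑ a ∈ Finset.range f, G a)
        + ∑ a ∈ Finset.range f,
            (-1 : ℚ_[p]) ^ a * χ (a : ZMod f) * ((f * p ^ N + a : ℕ) : ℚ_[p]) ^ n := by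
    intro N
    have hoddfp : Odd (f * p ^ N) := hf.mul (hp.pow)
    have step1 :
        (∑ k ∈ Finset.range (n + 1), (n.choose k : ℚ_[p]) * (f : ℚ_[p]) ^ (n - k) * S k N)
          = ∑ x ∈ Finset.range (f * p ^ N),
              (-1 : ℚ_[p]) ^ x * χ (x : ZMod f) * ((x : ℚ_[p]) + (f : ℚ_[p])) ^ n := by
      simp only [hS, Finset.mul_sum]
      rw [Finset.sum_comm]
      refine Finset.sum_congr rfl fun x _ => ?_
      rw [add_pow]
      rw [Finset.mul_sum]
      refine Finset.sum_congr rfl fun k hk => ?_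
      ring
    have step2 :
        (∑ x ∈ Finset.range (f * p ^ N),
            (-1 : ℚ_[p]) ^ x * χ (x : ZMod f) * ((x : ℚ_[p]) + (f : ℚ_[p])) ^ n)
          = - ∑ x ∈ Finset.range (f * p ^ N), G (x + f) := by
      rw [← Finset.sum_neg_distrib]
      refine Finset.sum_congr rfl fun x _ => ?_
      have hc : ((x + f : ℕ) : ZMod f) = (x : ZMod f) := by
        push_cast
        simp
      have hsign : ((-1 : ℚ_[p])) ^ (x + f) = -(-1 : ℚ_[p]) ^ x := by
        rw [pow_add, hf.neg_one_pow]
        ring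
      simp only [hG, hc, hsign]
      push_cast
      ring
    -- shift the sum
    have shift :
        (∑ x ∈ Finset.range (f * p ^ N), G (x + f))
          = (∑ x ∈ Finset.range (f * p ^ N), G x)
            + (∑ a ∈ Finset.range f, G (f * p ^ N + a))
            - ∑ a ∈ Finset.range f, G a := by
      have h1 : ∑ x ∈ Finset.range (f + f * p ^ N), G x
          = (∑ a ∈ Finset.range f, G a) + ∑ x ∈ Finset.range (f * p ^ N), G (f + x) :=
        Finset.sum_range_add G f (f * p ^ N)
      have h2 : ∑ x ∈ Finset.range (f * p ^ N + f), G x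
          = (∑ x ∈ Finset.range (f * p ^ N), G x) + ∑ a ∈ Finset.range f, G (f * p ^ N + a) :=
        Finset.sum_range_add G (f * p ^ N) f
      have h3 : ∑ x ∈ Finset.range (f * p ^ N), G (f + x)
          = ∑ x ∈ Finset.range (f * p ^ N), G (x + f) := by
        refine Finset.sum_congr rfl fun x _ => ?_
        rw [add_comm]
      rw [add_comm f (f * p ^ N)] at h1
      rw [h1] at h2
      rw [h3] at h2
      linear_combination h2
    have tail : ∀ a : ℕ, G (f * p ^ N + a)
        = -( (-1 : ℚ_[p]) ^ a * χ (a : ZMod f) * ((f * p ^ N + a : ℕ) : ℚ_[p]) ^ n) := by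
      intro a
      have hc : ((f * p ^ N + a : ℕ) : ZMod f) = (a : ZMod f) := by
        push_cast
        simp
      have hsign : ((-1 : ℚ_[p])) ^ (f * p ^ N + a) = -(-1 : ℚ_[p]) ^ a := by
        rw [pow_add, hoddfp.neg_one_pow]
        ring
      simp only [hG, hc, hsign]
      ring
    have hSn : S n N = ∑ x ∈ Finset.range (f * p ^ N), G x := rfl
    rw [step1, step2, shift, hSn, Finset.sum_congr rfl (fun a _ => tail a),
      Finset.sum_neg_distrib]
    ring
  -- limits
  have hlim1 : Tendsto (fun N =>
      (∑ k ∈ Finset.range (n + 1), (n.choose k : ℚ_[p]) * (f : ℚ_[p]) ^ (n - k) * S k N)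
        + S n N) atTop
      (nhds ((∑ k ∈ Finset.range (n + 1), (n.choose k : ℚ_[p]) * (f : ℚ_[p]) ^ (n - k) * E k)
        + E n)) := by
    refine Tendsto.add ?_ (hE n)
    refine tendsto_finset_sum _ fun k _ => ?_
    exact (hE k).const_mul _
  have hp0 : Tendsto (fun N : ℕ => ((p : ℚ_[p])) ^ N) atTop (nhds 0) := by
    apply tendsto_pow_atTop_nhds_zero_of_norm_lt_one
    rw [Padic.norm_p]
    have : (1 : ℝ) < (p : ℝ) := by
      exact_mod_cast (Fact.out : p.Prime).one_lt
    rw [inv_lt_one_iff₀]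
    right; exact this
  have hlim2 : Tendsto (fun N =>
      (∑ a ∈ Finset.range f, G a)
        + ∑ a ∈ Finset.range f,
            (-1 : ℚ_[p]) ^ a * χ (a : ZMod f) * ((f * p ^ N + a : ℕ) : ℚ_[p]) ^ n) atTop
      (nhds (2 * ∑ a ∈ Finset.range f, G a)) := by
    have : Tendsto (fun N =>
        ∑ a ∈ Finset.range f,
          (-1 : ℚ_[p]) ^ a * χ (a : ZMod f) * ((f * p ^ N + a : ℕ) : ℚ_[p]) ^ n) atTop
        (nhds (∑ a ∈ Finset.range f, G a)) := by
      refine tendsto_finset_sum _ fun a _ => ?_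
      have hcast : ∀ N : ℕ, ((f * p ^ N + a : ℕ) : ℚ_[p])
          = (f : ℚ_[p]) * ((p : ℚ_[p])) ^ N + (a : ℚ_[p]) := by
        intro N; push_cast; ring
      simp only [hcast, hG]
      have : Tendsto (fun N : ℕ => (f : ℚ_[p]) * ((p : ℚ_[p])) ^ N + (a : ℚ_[p])) atTop
          (nhds ((a : ℚ_[p]))) := by
        have := (hp0.const_mul (f : ℚ_[p])).add_const (a : ℚ_[p])
        simpa using this
      exact ((this.pow n).const_mul _)
    have h2 := (tendsto_const_nhds (x := ∑ a ∈ Finset.range f, G a)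
      (f := atTop (α := ℕ))).add this
    convert h2 using 2
    ring
  have := tendsto_nhds_unique (hlim1.congr fun N => key N) hlim2
  rw [this]
end
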